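/- arXiv:2504.08491 — 7 statements merged into one kernel-verified Lean document; each statement's English description precedes it below -/
import Mathlib

section
/- Let I = [t₁, t_∞] and let ζₙ : I → Iₙ = [tₙ, t_{n+1}] be contraction homeomorphisms onto the subintervals of a countable partition t₁ < t₂ < ⋯ with tₙ → t_∞. Let Φ, B ∈ C(I, K(ℝ)) satisfy B(t₁) − Φ(t₁) = B(t_∞) − Φ(t_∞), and let |α| < 1. Then the Read–Bajraktarević operator φ defined on C_Φ = {U ∈ C(I, K(ℝ)) : U(t₁) − B(t₁) = U(t_∞) − B(t_∞)} by (φU)(t) = Φ(t) + α[U(ζₙ⁻¹(t)) − B(ζₙ⁻¹(t))] for t ∈ Iₙ is a contraction with Lipschitz constant |α| with respect to the uniform metric induced by the Hausdorff metric. -/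
/-!
On each piece `[p n, p (n + 1)]` the operator is a translate of `α` times a translate of
`U ∘ ξ n`. Translations do not increase the Hausdorff distance and scaling by `α` multiplies it by
`|α|`, which gives the bound on every piece. The pieces cover `[a, T)`, and the bound at `T`
follows by continuity.
-/

open Set Metric Pointwise TopologicalSpace Filter

namespace Metric

variable {𝕜 E : Type*} [SeminormedAddCommGroup E]

theorem hausdorffEDist_add_left_le (u s t : Set E) :
    hausdorffEDist (u + s) (u + t) ≤ hausdorffEDist s t := by
  have key : ∀ s t : Set E, ∀ x ∈ u + s, infEDist x (u + t) ≤ hausdorffEDist s t := by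
    rintro s t _ ⟨a, ha, b, hb, rfl⟩
    calc infEDist (a + b) (u + t) ≤ infEDist (a +ᵥ b) (a +ᵥ t) :=
          infEDist_anti (vadd_set_subset_add ha)
      _ = infEDist b t := infEDist_vadd a b t
      _ ≤ hausdorffEDist s t := infEDist_le_hausdorffEDist_of_mem hb
  refine hausdorffEDist_le_of_infEDist (key s t) fun x hx => ?_
  rw [hausdorffEDist_comm]
  exact key t s x hx

theorem hausdorffEDist_sub_right_le (s t u : Set E) :
    hausdorffEDist (s - u) (t - u) ≤ hausdorffEDist s t := by
  simpa only [sub_eq_add_neg, add_comm _ (-u)] using hausdorffEDist_add_left_le (-u) s t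

variable [NormedDivisionRing 𝕜] [Module 𝕜 E] [NormSMulClass 𝕜 E]

theorem hausdorffEDist_smul_le (c : 𝕜) {s t : Set E} (hs : s.Nonempty) (ht : t.Nonempty) :
    hausdorffEDist (c • s) (c • t) ≤ ‖c‖₊ * hausdorffEDist s t := by
  rcases eq_or_ne c 0 with rfl | hc
  · simp [zero_smul_set hs, zero_smul_set ht]
  have key : ∀ s t : Set E, ∀ x ∈ c • s, infEDist x (c • t) ≤ ‖c‖₊ * hausdorffEDist s t := by
    rintro s t _ ⟨b, hb, rfl⟩
    rw [infEDist_smul₀ hc]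
    exact mul_le_mul_right (infEDist_le_hausdorffEDist_of_mem hb) _
  refine hausdorffEDist_le_of_infEDist (key s t) fun x hx => ?_
  rw [hausdorffEDist_comm]
  exact key t s x hx

theorem hausdorffEDist_add_smul_sub_le (P : Set E) (c : 𝕜) {X Y C : Set E}
    (hX : X.Nonempty) (hY : Y.Nonempty) (hC : C.Nonempty) :
    hausdorffEDist (P + c • (X - C)) (P + c • (Y - C)) ≤ ‖c‖₊ * hausdorffEDist X Y :=
  calc _ ≤ hausdorffEDist (c • (X - C)) (c • (Y - C)) := hausdorffEDist_add_left_le _ _ _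
    _ ≤ ‖c‖₊ * hausdorffEDist (X - C) (Y - C) :=
      hausdorffEDist_smul_le c (hX.sub hC) (hY.sub hC)
    _ ≤ ‖c‖₊ * hausdorffEDist X Y := mul_le_mul_right (hausdorffEDist_sub_right_le _ _ _) _

end Metric

namespace TopologicalSpace.NonemptyCompacts

variable {𝕜 E : Type*} [NormedAddCommGroup E] [NormedDivisionRing 𝕜] [Module 𝕜 E]
  [NormSMulClass 𝕜 E]

theorem dist_le_of_coe_eq_add_smul_sub {K L X Y : NonemptyCompacts E} {P C : Set E} {c : 𝕜}
    (hC : C.Nonempty) (hK : (K : Set E) = P + c • (X - C)) (hL : (L : Set E) = P + c • (Y - C)) :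
    dist K L ≤ ‖c‖ * dist X Y := by
  have h : edist K L ≤ ‖c‖₊ * edist X Y := by
    change hausdorffEDist (K : Set E) L ≤ ‖c‖₊ * hausdorffEDist (X : Set E) Y
    rw [hK, hL]
    exact Metric.hausdorffEDist_add_smul_sub_le P c X.nonempty Y.nonempty hC
  rw [edist_nndist, edist_nndist] at h
  rw [dist_nndist, dist_nndist]
  exact_mod_cast h

end TopologicalSpace.NonemptyCompacts

theorem exists_mem_Ico_succ_of_le_of_lt {α : Type*} [LinearOrder α] {p : ℕ → α} {t : α}
    (h0 : p 0 ≤ t) (h : ∃ n, t < p n) : ∃ n, t ∈ Ico (p n) (p (n + 1)) := by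
  by_contra! hstep
  obtain ⟨n, hn⟩ := h
  have hle : ∀ n, p n ≤ t := fun n =>
    Nat.rec h0 (fun n ih => not_lt.1 fun hlt => hstep n ⟨ih, hlt⟩) n
  exact (hle n).not_gt hn

/-- `p n` is the partition point `t_{n+1}` of the paper (`p 0 = t₁ = a`, `T = t_∞`), and `ξ n`
plays the role of `ζₙ⁻¹`. -/
theorem stmt_4_general
    (a T : ℝ)
    (p : ℕ → ℝ) (hp : StrictMono p) (hpa : p 0 = a)
    (hpT : Tendsto p atTop (nhds T))
    (ζ ξ : ℕ → ℝ → ℝ)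
    (hξ : ∀ n, ∀ y ∈ Icc (p n) (p (n + 1)), ξ n y ∈ Icc a T ∧ ζ n (ξ n y) = y)
    (α : ℝ)
    (Φ B : ℝ → NonemptyCompacts ℝ)
    (U V φU φV : ℝ → NonemptyCompacts ℝ)
    (hU : ContinuousOn U (Icc a T)) (hV : ContinuousOn V (Icc a T))
    (hφU : ContinuousOn φU (Icc a T)) (hφV : ContinuousOn φV (Icc a T))
    (hφUeq : ∀ n, ∀ t ∈ Icc (p n) (p (n + 1)),
      (φU t : Set ℝ) = (Φ t : Set ℝ) + α • ((U (ξ n t) : Set ℝ) - (B (ξ n t) : Set ℝ)))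
    (hφVeq : ∀ n, ∀ t ∈ Icc (p n) (p (n + 1)),
      (φV t : Set ℝ) = (Φ t : Set ℝ) + α • ((V (ξ n t) : Set ℝ) - (B (ξ n t) : Set ℝ))) :
    ⨆ t : ↥(Icc a T), dist (φU ↑t) (φV ↑t) ≤ |α| * ⨆ t : ↥(Icc a T), dist (U ↑t) (V ↑t) := by
  have hp_lt : ∀ n, p n < T := fun n =>
    (hp n.lt_succ_self).trans_le (hp.monotone.ge_of_tendsto hpT _)
  have haT : a < T := hpa ▸ hp_lt 0
  have : CompactSpace (Icc a T) := isCompact_iff_compactSpace.1 isCompact_Icc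
  have : Nonempty (Icc a T) := (nonempty_Icc.2 haT.le).to_subtype
  set M := ⨆ t : Icc a T, dist (U t) (V t)
  have hUV_le : ∀ s ∈ Icc a T, dist (U s) (V s) ≤ M := fun s hs =>
    le_ciSup (isCompact_range (hU.domRestrict.dist hV.domRestrict)).bddAbove ⟨s, hs⟩
  have hpiece : ∀ n, ∀ t ∈ Icc (p n) (p (n + 1)), dist (φU t) (φV t) ≤ |α| * M := fun n t ht =>
    calc dist (φU t) (φV t) ≤ ‖α‖ * dist (U (ξ n t)) (V (ξ n t)) :=
          NonemptyCompacts.dist_le_of_coe_eq_add_smul_sub (B _).nonempty (hφUeq n t ht)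
            (hφVeq n t ht)
      _ ≤ |α| * M := mul_le_mul_of_nonneg_left (hUV_le _ (hξ n t ht).1) (abs_nonneg α)
  have hIco : ∀ t ∈ Ico a T, dist (φU t) (φV t) ≤ |α| * M := fun t ht => by
    obtain ⟨n, hn⟩ := exists_mem_Ico_succ_of_le_of_lt (hpa ▸ ht.1)
      (hpT.eventually (lt_mem_nhds ht.2)).exists
    exact hpiece n t (Ico_subset_Icc_self hn)
  have hIcc : ∀ t ∈ Icc a T, dist (φU t) (φV t) ≤ |α| * M := by
    have hcont : ContinuousOn (fun t => dist (φU t) (φV t)) (Icc a T) := by fun_prop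
    rw [← closure_Ico haT.ne] at hcont ⊢
    exact le_on_closure hIco hcont continuousOn_const
  exact ciSup_le fun t => hIcc t t.2

/-- The Read–Bajraktarević operator of the countable fractal construction is a contraction
with Lipschitz constant `|α|` for the uniform metric induced by the Hausdorff metric.
Here `p n` is the partition point `t_{n+1}` of the paper (`p 0 = t₁ = a`, `T = t_∞`),
`ζ n` is the contraction homeomorphism of `I = [a, T]` onto `[p n, p (n+1)]`,
`ξ n` is its inverse, and `φU`, `φV` are the images of `U`, `V` under the RB operator. -/
theorem stmt_4
    (a T : ℝ) (haT : a < T)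
    (p : ℕ → ℝ) (hp : StrictMono p) (hpa : p 0 = a)
    (hpT : Tendsto p atTop (nhds T))
    (ζ ξ : ℕ → ℝ → ℝ) (c : ℕ → ℝ) (hc : ∀ n, c n < 1)
    (hζlip : ∀ n, ∀ x ∈ Icc a T, ∀ y ∈ Icc a T, |ζ n x - ζ n y| ≤ c n * |x - y|)
    (hζcont : ∀ n, ContinuousOn (ζ n) (Icc a T))
    (hζinj : ∀ n, InjOn (ζ n) (Icc a T))
    (hζim : ∀ n, ζ n '' Icc a T = Icc (p n) (p (n + 1)))
    (hζend : ∀ n, (ζ n a = p n ∧ ζ n T = p (n + 1)) ∨ (ζ n a = p (n + 1) ∧ ζ n T = p n))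
    (hξ : ∀ n, ∀ y ∈ Icc (p n) (p (n + 1)), ξ n y ∈ Icc a T ∧ ζ n (ξ n y) = y)
    (α : ℝ) (hα : |α| < 1)
    (Φ B : ℝ → NonemptyCompacts ℝ)
    (hΦ : ContinuousOn Φ (Icc a T)) (hB : ContinuousOn B (Icc a T))
    (hend : (B a : Set ℝ) - (Φ a : Set ℝ) = (B T : Set ℝ) - (Φ T : Set ℝ))
    (U V φU φV : ℝ → NonemptyCompacts ℝ)
    (hU : ContinuousOn U (Icc a T)) (hV : ContinuousOn V (Icc a T))
    (hUc : (U a : Set ℝ) - (B a : Set ℝ) = (U T : Set ℝ) - (B T : Set ℝ))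
    (hVc : (V a : Set ℝ) - (B a : Set ℝ) = (V T : Set ℝ) - (B T : Set ℝ))
    (hφU : ContinuousOn φU (Icc a T)) (hφV : ContinuousOn φV (Icc a T))
    (hφUeq : ∀ n, ∀ t ∈ Icc (p n) (p (n + 1)),
      (φU t : Set ℝ) = (Φ t : Set ℝ) + α • ((U (ξ n t) : Set ℝ) - (B (ξ n t) : Set ℝ)))
    (hφVeq : ∀ n, ∀ t ∈ Icc (p n) (p (n + 1)),
      (φV t : Set ℝ) = (Φ t : Set ℝ) + α • ((V (ξ n t) : Set ℝ) - (B (ξ n t) : Set ℝ))) :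
    ⨆ t : ↥(Icc a T), dist (φU ↑t) (φV ↑t) ≤ |α| * ⨆ t : ↥(Icc a T), dist (U ↑t) (V ↑t) :=
  stmt_4_general a T p hp hpa hpT ζ ξ hξ α Φ B U V φU φV hU hV hφU hφV hφUeq hφVeq
end

section
/- For any Φ ∈ C(I, K(ℝ)) and its α-countable fractal function Φ^α, the uniform error satisfies ‖Φ^α − Φ‖_∞ ≤ (|α|/(1−|α|)) ‖Φ − B‖_∞ + (2|α|/(1−|α|)) ‖Φ‖_∞, where ‖U − V‖_∞ = sup_{t∈I} H_d(U(t), V(t)) and ‖Φ‖_∞ = sup_{t∈I} H_d(Φ(t), {0}). -/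
/-!
On each piece `Iₙ` the functional equation reads `Φ^α(t) = Φ(t) + α • (Φ^α(s) - B(s))` with
`s = ξₙ(t) ∈ I`. Adding `α • (P - Q)` to a set moves it by at most `|α| (‖P‖ + ‖Q‖)` in the
Hausdorff metric, and the triangle inequality through `Φ(s)` bounds `‖Φ^α(s)‖ + ‖B(s)‖` by
`‖Φ^α - Φ‖_∞ + ‖Φ - B‖_∞ + 2 ‖Φ‖_∞`. The pieces cover `[a, T)` and continuity reaches `T`, so
`‖Φ^α - Φ‖_∞ ≤ |α| (‖Φ^α - Φ‖_∞ + ‖Φ - B‖_∞ + 2 ‖Φ‖_∞)`, which rearranges to the claim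
because `|α| < 1`.
-/

open Set Metric Pointwise TopologicalSpace Filter

theorem Nat.exists_mem_Icc_of_le_of_lt {α : Type*} [LinearOrder α] {p : ℕ → α} {t : α}
    (h0 : p 0 ≤ t) {n : ℕ} (hn : t < p n) : ∃ m, t ∈ Icc (p m) (p (m + 1)) := by
  induction n with
  | zero => exact absurd h0 (not_le.2 hn)
  | succ n ih =>
    by_cases h : p n ≤ t
    · exact ⟨n, h, hn.le⟩
    · exact ih (not_le.1 h)

theorem IsCompact.le_ciSup_of_continuousOn {X β : Type*} [TopologicalSpace X]
    [ConditionallyCompleteLinearOrder β] [TopologicalSpace β] [OrderTopology β]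
    {s : Set X} {f : X → β} (hs : IsCompact s) (hf : ContinuousOn f s) {x : X} (hx : x ∈ s) :
    f x ≤ ⨆ y : s, f y :=
  le_ciSup (by rw [← image_eq_range]; exact hs.bddAbove_image hf) (⟨x, hx⟩ : s)

namespace Metric

theorem norm_le_hausdorffDist_zero {E : Type*} [SeminormedAddCommGroup E] {s : Set E} {x : E}
    (hx : x ∈ s) (hs : hausdorffEDist s {0} ≠ ⊤) : ‖x‖ ≤ hausdorffDist s {0} := by
  simpa only [infDist_singleton, dist_zero_right] using infDist_le_hausdorffDist_of_mem hx hs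

theorem hausdorffDist_add_smul_sub_le {E : Type*} [SeminormedAddCommGroup E] [NormedSpace ℝ E]
    (A : Set E) {P Q : Set E} (c : ℝ)
    (hP : hausdorffEDist P {0} ≠ ⊤) (hQ : hausdorffEDist Q {0} ≠ ⊤) :
    hausdorffDist (A + c • (P - Q)) A ≤ |c| * (hausdorffDist P {0} + hausdorffDist Q {0}) := by
  have hsmall : ∀ p ∈ P, ∀ q ∈ Q,
      ‖c • (p - q)‖ ≤ |c| * (hausdorffDist P {0} + hausdorffDist Q {0}) := by
    intro p hp q hq
    rw [norm_smul, Real.norm_eq_abs]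
    gcongr
    exact (norm_sub_le p q).trans
      (add_le_add (norm_le_hausdorffDist_zero hp hP) (norm_le_hausdorffDist_zero hq hQ))
  obtain ⟨p₀, hp₀⟩ := nonempty_of_hausdorffEDist_ne_top (singleton_nonempty 0)
    (hausdorffEDist_comm.trans_ne hP)
  obtain ⟨q₀, hq₀⟩ := nonempty_of_hausdorffEDist_ne_top (singleton_nonempty 0)
    (hausdorffEDist_comm.trans_ne hQ)
  refine hausdorffDist_le_of_mem_dist
    (mul_nonneg (abs_nonneg c) (add_nonneg hausdorffDist_nonneg hausdorffDist_nonneg)) ?_ ?_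
  · rintro _ ⟨x, hx, _, ⟨_, ⟨p, hp, q, hq, rfl⟩, rfl⟩, rfl⟩
    exact ⟨x, hx, by simpa only [dist_self_add_left] using hsmall p hp q hq⟩
  · intro x hx
    refine ⟨x + c • (p₀ - q₀), add_mem_add hx (smul_mem_smul_set (sub_mem_sub hp₀ hq₀)), ?_⟩
    simpa only [dist_comm x, dist_self_add_left] using hsmall p₀ hp₀ q₀ hq₀

end Metric

theorem TopologicalSpace.NonemptyCompacts.dist_le_of_coe_eq_add_smul_sub_s8 {E : Type*}
    [NormedAddCommGroup E] [NormedSpace ℝ E] {X A P Q R : NonemptyCompacts E} {c : ℝ}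
    (h : (X : Set E) = A + c • (P - Q)) :
    dist X A ≤ |c| * (dist P R + dist R Q + 2 * hausdorffDist (R : Set E) {0}) := by
  have hR : dist R {0} = hausdorffDist (R : Set E) {0} := rfl
  calc dist X A ≤ |c| * (dist P {0} + dist Q {0}) := by
        rw [NonemptyCompacts.dist_eq, h]
        exact hausdorffDist_add_smul_sub_le _ c (edist_ne_top P {0}) (edist_ne_top Q {0})
    _ ≤ |c| * (dist P R + dist R Q + 2 * hausdorffDist (R : Set E) {0}) := by
        gcongr |c| * ?_
        linarith [dist_triangle P R {0}, dist_triangle_left Q {0} R]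

theorem stmt_8_general
    (a T : ℝ) (haT : a < T)
    (p : ℕ → ℝ) (hpa : p 0 = a)
    (hpT : Tendsto p atTop (nhds T))
    (ζ ξ : ℕ → ℝ → ℝ)
    (hξ : ∀ n, ∀ y ∈ Icc (p n) (p (n + 1)), ξ n y ∈ Icc a T ∧ ζ n (ξ n y) = y)
    (α : ℝ) (hα : |α| < 1)
    (Φ B Φα : ℝ → NonemptyCompacts ℝ)
    (hΦ : ContinuousOn Φ (Icc a T)) (hB : ContinuousOn B (Icc a T))
    (hΦα : ContinuousOn Φα (Icc a T))
    (hΦαeq : ∀ n, ∀ t ∈ Icc (p n) (p (n + 1)),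
      (Φα t : Set ℝ) = (Φ t : Set ℝ) + α • ((Φα (ξ n t) : Set ℝ) - (B (ξ n t) : Set ℝ))) :
    ⨆ t : ↥(Icc a T), dist (Φα ↑t) (Φ ↑t) ≤
      (|α| / (1 - |α|)) * (⨆ t : ↥(Icc a T), dist (Φ ↑t) (B ↑t)) +
      (2 * |α| / (1 - |α|)) * ⨆ t : ↥(Icc a T), Metric.hausdorffDist (Φ ↑t : Set ℝ) {0} := by
  set E := ⨆ t : ↥(Icc a T), dist (Φα ↑t) (Φ ↑t)
  set F := ⨆ t : ↥(Icc a T), dist (Φ ↑t) (B ↑t)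
  set G := ⨆ t : ↥(Icc a T), Metric.hausdorffDist (Φ ↑t : Set ℝ) {0}
  have hpoint : ∀ t ∈ Ico a T, dist (Φα t) (Φ t) ≤ |α| * (E + F + 2 * G) := by
    intro t ht
    obtain ⟨n, hn⟩ := Nat.exists_mem_Icc_of_le_of_lt (hpa ▸ ht.1)
      (hpT.eventually (eventually_gt_nhds ht.2)).exists.choose_spec
    have hs := (hξ n t hn).1
    refine (NonemptyCompacts.dist_le_of_coe_eq_add_smul_sub_s8 (R := Φ (ξ n t))
      (hΦαeq n t hn)).trans ?_
    gcongr
    · exact isCompact_Icc.le_ciSup_of_continuousOn (f := fun t => dist (Φα t) (Φ t))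
        (by fun_prop) hs
    · exact isCompact_Icc.le_ciSup_of_continuousOn (f := fun t => dist (Φ t) (B t))
        (by fun_prop) hs
    · exact isCompact_Icc.le_ciSup_of_continuousOn (f := fun t => dist (Φ t) {0})
        (by fun_prop) hs
  have hE : E ≤ |α| * (E + F + 2 * G) := by
    have : Nonempty (Icc a T) := (nonempty_Icc.2 haT.le).to_subtype
    refine ciSup_le fun t => ?_
    exact le_on_closure hpoint (by rw [closure_Ico haT.ne]; fun_prop) continuousOn_const
      (by rw [closure_Ico haT.ne]; exact t.2)
  have hpos : 0 < 1 - |α| := by linarith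
  rw [div_mul_eq_mul_div, div_mul_eq_mul_div, ← add_div, le_div_iff₀ hpos]
  linarith

/-- Error bound between a set-valued map `Φ` and its α-countable fractal function `Φα`:
`‖Φ^α − Φ‖_∞ ≤ |α|/(1−|α|) ‖Φ − B‖_∞ + 2|α|/(1−|α|) ‖Φ‖_∞`, where the norms are the
uniform Hausdorff distances and `‖Φ‖_∞ = sup_t H_d(Φ(t), {0})`. -/
theorem stmt_8
    (a T : ℝ) (haT : a < T)
    (p : ℕ → ℝ) (hp : StrictMono p) (hpa : p 0 = a)
    (hpT : Tendsto p atTop (nhds T))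
    (ζ ξ : ℕ → ℝ → ℝ) (c : ℕ → ℝ) (hc : ∀ n, c n < 1)
    (hζlip : ∀ n, ∀ x ∈ Icc a T, ∀ y ∈ Icc a T, |ζ n x - ζ n y| ≤ c n * |x - y|)
    (hζcont : ∀ n, ContinuousOn (ζ n) (Icc a T))
    (hζinj : ∀ n, InjOn (ζ n) (Icc a T))
    (hζim : ∀ n, ζ n '' Icc a T = Icc (p n) (p (n + 1)))
    (hζend : ∀ n, (ζ n a = p n ∧ ζ n T = p (n + 1)) ∨ (ζ n a = p (n + 1) ∧ ζ n T = p n))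
    (hξ : ∀ n, ∀ y ∈ Icc (p n) (p (n + 1)), ξ n y ∈ Icc a T ∧ ζ n (ξ n y) = y)
    (α : ℝ) (hα : |α| < 1)
    (Φ B Φα : ℝ → NonemptyCompacts ℝ)
    (hΦ : ContinuousOn Φ (Icc a T)) (hB : ContinuousOn B (Icc a T))
    (hΦα : ContinuousOn Φα (Icc a T))
    (hΦαeq : ∀ n, ∀ t ∈ Icc (p n) (p (n + 1)),
      (Φα t : Set ℝ) = (Φ t : Set ℝ) + α • ((Φα (ξ n t) : Set ℝ) - (B (ξ n t) : Set ℝ))) :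
    ⨆ t : ↥(Icc a T), dist (Φα ↑t) (Φ ↑t) ≤
      (|α| / (1 - |α|)) * (⨆ t : ↥(Icc a T), dist (Φ ↑t) (B ↑t)) +
      (2 * |α| / (1 - |α|)) * ⨆ t : ↥(Icc a T), Metric.hausdorffDist (Φ ↑t : Set ℝ) {0} :=
  stmt_8_general a T haT p hpa hpT ζ ξ hξ α hα Φ B Φα hΦ hB hΦα hΦαeq
end

section
/- Let ζᵢ : I → I, i ∈ ℕ, be contraction maps with contraction coefficients aᵢ, a = sup aᵢ < 1, mapping I onto the subintervals Iᵢ = [tᵢ, t_{i+1}] of a countable partition t₁ < t₂ < ⋯ → t_∞ of I = [0,1] with sup_i (tᵢ − t_{i−1}) < ∞ attained. Then the set S = ⋃_{k∈ℕ} ⋃_{i₁,…,i_k ∈ ℕ} ζ_{i₁} ∘ ⋯ ∘ ζ_{i_k}({t₁, t₂, t₃, …, t_∞}) is dense in I. -/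
open Set Filter

/-- The set of images of the partition points under all finite compositions
`ζ_{i₁} ∘ ⋯ ∘ ζ_{i_k}` (encoded by nonempty lists of indices, via `List.foldr`) is dense
in `I = [0,1]`. Here `p n` is the partition point `t_{n+1}` (`p 0 = 0 = t₁`, `t_∞ = 1`),
each `ζ i` is a contraction of `[0,1]` onto `[p i, p (i+1)]` with Lipschitz constant
`a i ≤ amax < 1`. -/
theorem stmt_9
    (p : ℕ → ℝ) (hp : StrictMono p) (hp0 : p 0 = 0)
    (hp1 : Tendsto p atTop (nhds 1))
    (ζ : ℕ → ℝ → ℝ) (a : ℕ → ℝ) (amax : ℝ) (hamax : amax < 1) (ha : ∀ i, a i ≤ amax)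
    (hζlip : ∀ i, ∀ x ∈ Icc (0:ℝ) 1, ∀ y ∈ Icc (0:ℝ) 1, |ζ i x - ζ i y| ≤ a i * |x - y|)
    (hζim : ∀ i, ζ i '' Icc (0:ℝ) 1 = Icc (p i) (p (i + 1))) :
    Icc (0:ℝ) 1 ⊆ closure {x : ℝ | ∃ l : List ℕ, l ≠ [] ∧
      ∃ y ∈ range p ∪ {1}, x = l.foldr (fun i z => ζ i z) y} := by
  set S := {x : ℝ | ∃ l : List ℕ, l ≠ [] ∧
      ∃ y ∈ range p ∪ {1}, x = l.foldr (fun i z => ζ i z) y} with hSdef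
  set b : ℝ := max amax 0 with hbdef
  have hb0 : (0:ℝ) ≤ b := le_max_right _ _
  have hb1 : b < 1 := max_lt hamax zero_lt_one
  have hpnonneg : ∀ n, 0 ≤ p n := fun n => hp0 ▸ hp.monotone (Nat.zero_le n)
  have hple1 : ∀ n, p n ≤ 1 := fun n => hp.monotone.ge_of_tendsto hp1 n
  have hIsub : ∀ i, Icc (p i) (p (i + 1)) ⊆ Icc (0:ℝ) 1 :=
    fun i => Icc_subset_Icc (hpnonneg i) (hple1 (i + 1))
  have key : ∀ k : ℕ, ∀ x ∈ Ico (0:ℝ) 1, ∃ s ∈ S, s ∈ Icc (0:ℝ) 1 ∧ |x - s| ≤ b ^ k := by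
    intro k
    induction k with
    | zero =>
      intro x hx
      have hs01 : ζ 0 (p 0) ∈ Icc (p 0) (p 1) := by
        rw [← hζim 0]
        exact ⟨p 0, ⟨hpnonneg 0, hple1 0⟩, rfl⟩
      have hs01' : ζ 0 (p 0) ∈ Icc (0:ℝ) 1 := hIsub 0 hs01
      refine ⟨ζ 0 (p 0), ⟨[0], by simp, p 0, Or.inl ⟨0, rfl⟩, rfl⟩, hs01', ?_⟩
      rw [pow_zero, abs_sub_le_iff]
      constructor <;> linarith [hx.1, hx.2.le, hs01'.1, hs01'.2]
    | succ k ih =>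
      intro x hx
      have hex : ∃ n, x < p n := (hp1.eventually (eventually_gt_nhds hx.2)).exists
      have hn0 : Nat.find hex ≠ 0 := by
        intro h
        have := Nat.find_spec hex
        rw [h, hp0] at this
        linarith [hx.1]
      obtain ⟨i, hi⟩ : ∃ i, Nat.find hex = i + 1 := ⟨Nat.find hex - 1, by omega⟩
      have hxlt : x < p (i + 1) := hi ▸ Nat.find_spec hex
      have hxge : p i ≤ x := by
        by_contra h
        exact Nat.find_min hex (hi ▸ Nat.lt_succ_self i) (lt_of_not_ge h)
      obtain ⟨y, hy, hxy⟩ : x ∈ ζ i '' Icc (0:ℝ) 1 := by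
        rw [hζim i]; exact ⟨hxge, hxlt.le⟩
      rcases eq_or_lt_of_le hy.2 with hy1 | hy1
      · -- y = 1, so x itself is in S
        refine ⟨x, ⟨[i], by simp, 1, Or.inr rfl, by simp [← hxy, hy1]⟩,
          ⟨hx.1, hx.2.le⟩, ?_⟩
        simpa using pow_nonneg hb0 (k + 1)
      · obtain ⟨s, hsS, hs01, hdist⟩ := ih y ⟨hy.1, hy1⟩
        obtain ⟨l, hl, y₀, hy₀, hfold⟩ := hsS
        have hmem : ζ i s ∈ S := ⟨i :: l, by simp, y₀, hy₀, by simp [List.foldr, ← hfold]⟩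
        have him : ζ i s ∈ Icc (p i) (p (i + 1)) := by
          rw [← hζim i]; exact ⟨s, hs01, rfl⟩
        refine ⟨ζ i s, hmem, hIsub i him, ?_⟩
        have h1 : |ζ i y - ζ i s| ≤ a i * |y - s| := hζlip i y hy s hs01
        have h2 : a i * |y - s| ≤ b * |y - s| :=
          mul_le_mul_of_nonneg_right ((ha i).trans (le_max_left _ _)) (abs_nonneg _)
        have h3 : b * |y - s| ≤ b * b ^ k := mul_le_mul_of_nonneg_left hdist hb0
        rw [← hxy, pow_succ']
        exact h1.trans (h2.trans h3)
  have hIco : Ico (0:ℝ) 1 ⊆ closure S := by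
    intro x hx
    rw [Metric.mem_closure_iff]
    intro ε hε
    obtain ⟨k, hk⟩ := ((tendsto_pow_atTop_nhds_zero_of_lt_one hb0 hb1).eventually
      (eventually_lt_nhds hε)).exists
    obtain ⟨s, hsS, _, hdist⟩ := key k x hx
    exact ⟨s, hsS, by rw [Real.dist_eq]; exact lt_of_le_of_lt hdist hk⟩
  calc Icc (0:ℝ) 1 = closure (Ico (0:ℝ) 1) := (closure_Ico (by norm_num)).symm
    _ ⊆ closure (closure S) := closure_mono hIco
    _ = closure S := closure_closure
end

section
/- Let Φ ∈ C(I, K_c(ℝ)) with fractal function Φ^α. Define D : (I × K_c(ℝ))² → [0,∞) by D((t,S₁),(w,S₂)) = |t − w| + H_d(S₁ + Φ^α(w), S₂ + Φ^α(t)). Then (I × K_c(ℝ), D) is a complete metric space. -/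
/-!
A compact convex subset `K` of `ℝ` is the interval `[inf K, sup K]`; Minkowski sums add endpoints
and the Hausdorff distance of two intervals is the larger of the two endpoint distances. Hence
`D((t,K),(w,L))` is the `ℓ¹`-combination of `|t - w|` and the max-distance between
`(inf K - inf Φ(t), sup K - sup Φ(t))` and `(inf L - inf Φ(w), sup L - sup Φ(w))`, so `D` is the
metric pulled back along these (injective) coordinates. Their image is the set of `(t, u, v)` with
`t ∈ I` and `u + inf Φ(t) ≤ v + sup Φ(t)`, which is closed because the endpoints of a set depend
1-Lipschitz on it in the Hausdorff metric; a closed subset of `ℝ³` is complete.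
-/

open Set Metric Pointwise TopologicalSpace

/-- `K_c(ℝ)`: the nonempty compact convex subsets of `ℝ`. -/
def KcReal : Type := {K : NonemptyCompacts ℝ // Convex ℝ (K : Set ℝ)}

theorem sInf_le_sInf_add_hausdorffDist {A B : Set ℝ} (hA : IsCompact A) (hB : IsCompact B)
    (hA₀ : A.Nonempty) (hB₀ : B.Nonempty) : sInf B ≤ sInf A + hausdorffDist A B := by
  have hfin := hausdorffEDist_ne_top_of_nonempty_of_bounded hA₀ hB₀ hA.isBounded hB.isBounded
  have hgap : sInf B - sInf A ≤ infDist (sInf A) B := (le_infDist hB₀).2 fun y hy =>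
    (sub_le_sub_right (csInf_le hB.bddBelow hy) _).trans
      ((Real.sub_le_dist _ _).trans_eq (dist_comm _ _))
  linarith [infDist_le_hausdorffDist_of_mem (hA.sInf_mem hA₀) hfin]

theorem sSup_le_sSup_add_hausdorffDist {A B : Set ℝ} (hA : IsCompact A) (hB : IsCompact B)
    (hA₀ : A.Nonempty) (hB₀ : B.Nonempty) : sSup B ≤ sSup A + hausdorffDist A B := by
  have hfin := hausdorffEDist_ne_top_of_nonempty_of_bounded hB₀ hA₀ hB.isBounded hA.isBounded
  have hgap : sSup B - sSup A ≤ infDist (sSup B) A := (le_infDist hA₀).2 fun y hy =>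
    (sub_le_sub_left (le_csSup hA.bddAbove hy) _).trans (Real.sub_le_dist _ _)
  have hB_near := infDist_le_hausdorffDist_of_mem (hB.sSup_mem hB₀) hfin
  rw [hausdorffDist_comm] at hB_near
  linarith

theorem abs_sInf_sub_sInf_le_hausdorffDist {A B : Set ℝ} (hA : IsCompact A) (hB : IsCompact B)
    (hA₀ : A.Nonempty) (hB₀ : B.Nonempty) : |sInf A - sInf B| ≤ hausdorffDist A B := by
  have hBA := sInf_le_sInf_add_hausdorffDist hB hA hB₀ hA₀
  rw [hausdorffDist_comm] at hBA
  exact abs_sub_le_iff.2 ⟨by linarith, by linarith [sInf_le_sInf_add_hausdorffDist hA hB hA₀ hB₀]⟩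

theorem abs_sSup_sub_sSup_le_hausdorffDist {A B : Set ℝ} (hA : IsCompact A) (hB : IsCompact B)
    (hA₀ : A.Nonempty) (hB₀ : B.Nonempty) : |sSup A - sSup B| ≤ hausdorffDist A B := by
  have hBA := sSup_le_sSup_add_hausdorffDist hB hA hB₀ hA₀
  rw [hausdorffDist_comm] at hBA
  exact abs_sub_le_iff.2 ⟨by linarith, by linarith [sSup_le_sSup_add_hausdorffDist hA hB hA₀ hB₀]⟩

theorem NonemptyCompacts.lipschitzWith_sInf :
    LipschitzWith 1 fun K : NonemptyCompacts ℝ => sInf (K : Set ℝ) :=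
  LipschitzWith.of_dist_le_mul fun K L => by
    rw [NNReal.coe_one, one_mul, Real.dist_eq, NonemptyCompacts.dist_eq]
    exact abs_sInf_sub_sInf_le_hausdorffDist K.isCompact L.isCompact K.nonempty L.nonempty

theorem NonemptyCompacts.lipschitzWith_sSup :
    LipschitzWith 1 fun K : NonemptyCompacts ℝ => sSup (K : Set ℝ) :=
  LipschitzWith.of_dist_le_mul fun K L => by
    rw [NNReal.coe_one, one_mul, Real.dist_eq, NonemptyCompacts.dist_eq]
    exact abs_sSup_sub_sSup_le_hausdorffDist K.isCompact L.isCompact K.nonempty L.nonempty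

theorem abs_sub_max_min_le {a b c d x : ℝ} (hx : x ∈ Icc a b) :
    |x - max c (min x d)| ≤ max |a - c| |b - d| := by
  obtain ⟨hax, hxb⟩ := hx
  have hac := (le_abs_self (c - a)).trans_eq (abs_sub_comm c a)
  have hbd := le_abs_self (b - d)
  have hM₁ := le_max_left |a - c| |b - d|
  have hM₂ := le_max_right |a - c| |b - d|
  have hac₀ := abs_nonneg (a - c)
  rw [abs_le]
  constructor
  · rcases le_total c (min x d) with h | h
    · rw [max_eq_right h]; linarith [min_le_left x d]
    · rw [max_eq_left h]; linarith
  · rcases le_total x d with h | h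
    · rw [min_eq_left h]; linarith [le_max_right c x]
    · rw [min_eq_right h]; linarith [le_max_right c d]

theorem hausdorffDist_Icc_Icc_le {a b c d : ℝ} (hab : a ≤ b) (hcd : c ≤ d) :
    hausdorffDist (Icc a b) (Icc c d) ≤ max |a - c| |b - d| := by
  refine hausdorffDist_le_of_mem_dist (by positivity) (fun x hx => ?_) fun x hx => ?_
  · exact ⟨max c (min x d), ⟨le_max_left _ _, max_le hcd (min_le_right _ _)⟩,
      abs_sub_max_min_le hx⟩
  · refine ⟨max a (min x b), ⟨le_max_left _ _, max_le hab (min_le_right _ _)⟩, ?_⟩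
    rw [abs_sub_comm a, abs_sub_comm b]
    exact abs_sub_max_min_le hx

theorem IsCompact.eq_Icc_of_convex {K : Set ℝ} (hK : IsCompact K) (hK₀ : K.Nonempty)
    (hKc : Convex ℝ K) : K = Icc (sInf K) (sSup K) :=
  eq_Icc_of_connected_compact ⟨hK₀, hKc.isPreconnected⟩ hK

theorem hausdorffDist_eq_max_of_convex {A B : Set ℝ} (hA : IsCompact A) (hB : IsCompact B)
    (hA₀ : A.Nonempty) (hB₀ : B.Nonempty) (hAc : Convex ℝ A) (hBc : Convex ℝ B) :
    hausdorffDist A B = max |sInf A - sInf B| |sSup A - sSup B| := by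
  refine le_antisymm ?_ (max_le (abs_sInf_sub_sInf_le_hausdorffDist hA hB hA₀ hB₀)
    (abs_sSup_sub_sSup_le_hausdorffDist hA hB hA₀ hB₀))
  calc hausdorffDist A B = hausdorffDist (Icc (sInf A) (sSup A)) (Icc (sInf B) (sSup B)) := by
        rw [← hA.eq_Icc_of_convex hA₀ hAc, ← hB.eq_Icc_of_convex hB₀ hBc]
    _ ≤ _ := hausdorffDist_Icc_Icc_le (csInf_le_csSup hA₀ hA.bddBelow hA.bddAbove)
        (csInf_le_csSup hB₀ hB.bddBelow hB.bddAbove)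

theorem KcReal.ext_sInf_sSup {K L : KcReal} (hinf : sInf (K.1 : Set ℝ) = sInf (L.1 : Set ℝ))
    (hsup : sSup (K.1 : Set ℝ) = sSup (L.1 : Set ℝ)) : K = L := by
  refine Subtype.ext (NonemptyCompacts.ext ?_)
  rw [K.1.isCompact.eq_Icc_of_convex K.1.nonempty K.2,
    L.1.isCompact.eq_Icc_of_convex L.1.nonempty L.2, hinf, hsup]

theorem hausdorffDist_add_add_eq_max {K L P Q : NonemptyCompacts ℝ} (hK : Convex ℝ (K : Set ℝ))
    (hL : Convex ℝ (L : Set ℝ)) (hP : Convex ℝ (P : Set ℝ)) (hQ : Convex ℝ (Q : Set ℝ)) :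
    hausdorffDist ((K : Set ℝ) + (P : Set ℝ)) ((L : Set ℝ) + (Q : Set ℝ)) =
      max |sInf (K : Set ℝ) + sInf (P : Set ℝ) - (sInf (L : Set ℝ) + sInf (Q : Set ℝ))|
        |sSup (K : Set ℝ) + sSup (P : Set ℝ) - (sSup (L : Set ℝ) + sSup (Q : Set ℝ))| := by
  rw [hausdorffDist_eq_max_of_convex (K.isCompact.add P.isCompact) (L.isCompact.add Q.isCompact)
      (K.nonempty.add P.nonempty) (L.nonempty.add Q.nonempty) (hK.add hP) (hL.add hQ),
    csInf_add K.nonempty K.isCompact.bddBelow P.nonempty P.isCompact.bddBelow,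
    csInf_add L.nonempty L.isCompact.bddBelow Q.nonempty Q.isCompact.bddBelow,
    csSup_add K.nonempty K.isCompact.bddAbove P.nonempty P.isCompact.bddAbove,
    csSup_add L.nonempty L.isCompact.bddAbove Q.nonempty Q.isCompact.bddAbove]

theorem WithLp.prod_dist_one_eq_add {α β : Type*} [PseudoMetricSpace α] [PseudoMetricSpace β]
    (x y : WithLp 1 (α × β)) : dist x y = dist x.fst y.fst + dist x.snd y.snd := by
  rw [WithLp.prod_dist_eq_add (by simp)]
  simp

section EndpointCoords

variable (Φ : ℝ → NonemptyCompacts ℝ) (s : Set ℝ)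

noncomputable def endpointCoords (x : s × KcReal) : WithLp 1 (ℝ × ℝ × ℝ) :=
  WithLp.toLp 1 (x.1, sInf (x.2.1 : Set ℝ) - sInf (Φ x.1 : Set ℝ),
    sSup (x.2.1 : Set ℝ) - sSup (Φ x.1 : Set ℝ))

theorem endpointCoords_injective : Function.Injective (endpointCoords Φ s) := by
  rintro ⟨t, K⟩ ⟨w, L⟩ h
  obtain ⟨htw, hinf, hsup⟩ : (t : ℝ) = w ∧ _ ∧ _ := by
    simpa only [Prod.mk.injEq] using WithLp.toLp_injective 1 h
  obtain rfl : t = w := Subtype.ext htw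
  exact Prod.ext rfl (KcReal.ext_sInf_sSup (by linarith) (by linarith))

variable {Φ s}

theorem dist_endpointCoords (hΦ : ∀ t ∈ s, Convex ℝ (Φ t : Set ℝ)) (x y : s × KcReal) :
    dist (endpointCoords Φ s x) (endpointCoords Φ s y) = |(x.1 : ℝ) - y.1| +
      hausdorffDist ((x.2.1 : Set ℝ) + (Φ y.1 : Set ℝ)) ((y.2.1 : Set ℝ) + (Φ x.1 : Set ℝ)) := by
  rw [WithLp.prod_dist_one_eq_add, Prod.dist_eq, Real.dist_eq, Real.dist_eq, Real.dist_eq,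
    hausdorffDist_add_add_eq_max x.2.2 y.2.2 (hΦ _ y.1.2) (hΦ _ x.1.2)]
  simp only [endpointCoords, WithLp.toLp_fst, WithLp.toLp_snd]
  congr 2 <;> congr 1 <;> ring

theorem range_endpointCoords :
    range (endpointCoords Φ s) = WithLp.ofLp ⁻¹'
      {p ∈ Prod.fst ⁻¹' s | p.2.1 + sInf (Φ p.1 : Set ℝ) ≤ p.2.2 + sSup (Φ p.1 : Set ℝ)} := by
  ext y
  constructor
  · rintro ⟨⟨⟨t, ht⟩, K⟩, rfl⟩
    have := csInf_le_csSup K.1.nonempty K.1.isCompact.bddBelow K.1.isCompact.bddAbove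
    exact ⟨ht, by simp only [endpointCoords]; linarith⟩
  · rintro ⟨ht, huv⟩
    let K : KcReal := ⟨⟨⟨Icc _ _, isCompact_Icc⟩, nonempty_Icc.2 huv⟩, convex_Icc _ _⟩
    refine ⟨(⟨_, ht⟩, K), WithLp.ofLp_injective 1 ?_⟩
    simp only [endpointCoords, K, NonemptyCompacts.coe_mk, Compacts.coe_mk, csInf_Icc huv,
      csSup_Icc huv, add_sub_cancel_right]

theorem isClosed_range_endpointCoords (hs : IsClosed s) (hΦ : ContinuousOn Φ s) :
    IsClosed (range (endpointCoords Φ s)) := by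
  have hinf := NonemptyCompacts.lipschitzWith_sInf.continuous.comp_continuousOn hΦ
  have hsup := NonemptyCompacts.lipschitzWith_sSup.continuous.comp_continuousOn hΦ
  rw [range_endpointCoords]
  refine ((hs.preimage continuous_fst).isClosed_le ?_ ?_).preimage
    (WithLp.prod_continuous_ofLp _ _ _)
  · exact continuous_snd.fst.continuousOn.add (hinf.comp continuous_fst.continuousOn fun _ h => h)
  · exact continuous_snd.snd.continuousOn.add (hsup.comp continuous_fst.continuousOn fun _ h => h)

end EndpointCoords

theorem stmt_11_general (a T : ℝ)
    (Φα : ℝ → NonemptyCompacts ℝ)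
    (hΦα : ContinuousOn Φα (Icc a T))
    (hΦαconv : ∀ t ∈ Icc a T, Convex ℝ (Φα t : Set ℝ)) :
    ∃ m : MetricSpace (↥(Icc a T) × KcReal),
      (∀ x y : ↥(Icc a T) × KcReal,
        m.dist x y = |(x.1 : ℝ) - (y.1 : ℝ)| +
          Metric.hausdorffDist
            ((x.2.1 : Set ℝ) + (Φα (y.1 : ℝ) : Set ℝ))
            ((y.2.1 : Set ℝ) + (Φα (x.1 : ℝ) : Set ℝ))) ∧
      @CompleteSpace (↥(Icc a T) × KcReal) m.toUniformSpace := by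
  let m := MetricSpace.induced _ (endpointCoords_injective Φα (Icc a T)) inferInstance
  refine ⟨m, dist_endpointCoords hΦαconv, ?_⟩
  have hiso : Isometry (endpointCoords Φα (Icc a T)) := Isometry.of_dist_eq fun _ _ => rfl
  exact (completeSpace_iff_isComplete_range hiso.isUniformInducing).2
    (isClosed_range_endpointCoords isClosed_Icc hΦα).isComplete

/-- The function `D((t,S₁),(w,S₂)) = |t−w| + H_d(S₁ + Φ^α(w), S₂ + Φ^α(t))` turns
`I × K_c(ℝ)` into a complete metric space, where `Φ^α ∈ C(I, K_c(ℝ))` is a fixed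
continuous set-valued map and `+` is the Minkowski sum. -/
theorem stmt_11 (a T : ℝ) (haT : a < T)
    (Φα : ℝ → NonemptyCompacts ℝ)
    (hΦα : ContinuousOn Φα (Icc a T))
    (hΦαconv : ∀ t ∈ Icc a T, Convex ℝ (Φα t : Set ℝ)) :
    ∃ m : MetricSpace (↥(Icc a T) × KcReal),
      (∀ x y : ↥(Icc a T) × KcReal,
        m.dist x y = |(x.1 : ℝ) - (y.1 : ℝ)| +
          Metric.hausdorffDist
            ((x.2.1 : Set ℝ) + (Φα (y.1 : ℝ) : Set ℝ))
            ((y.2.1 : Set ℝ) + (Φα (x.1 : ℝ) : Set ℝ))) ∧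
      @CompleteSpace (↥(Icc a T) × KcReal) m.toUniformSpace :=
  stmt_11_general a T Φα hΦα hΦαconv
end

section
/- With D((t,S₁),(w,S₂)) = |t−w| + H_d(S₁ + Φ^α(w), S₂ + Φ^α(t)) on I × K_c(ℝ), the maps G_j(t, S) = (ζ_j(t), αS + Φ(ζ_j(t)) − αB(t)) are contractions: D(G_j(t,S₁), G_j(w,S₂)) ≤ max{|α|, a_j} · D((t,S₁),(w,S₂)) for all (t,S₁),(w,S₂) ∈ I × K_c(ℝ), provided max{|α|, a_j} < 1. -/
open Set Metric Pointwise TopologicalSpace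

/-! Expanding `Φ^α(ζ_j w)` and `Φ^α(ζ_j t)` by the self-referential equation, the two sets on the
left are `α(S₁ + Φ^α(w)) + C` and `α(S₂ + Φ^α(t)) + C` for the common set
`C = Φ(ζ_j t) + Φ(ζ_j w) − αB(t) − αB(w)`: the Minkowski rearrangement only uses `+` and pointwise
negation, so it is exact. Adding a common set does not increase the Hausdorff distance and scaling
by `α` multiplies it by `|α|`, so the set component contracts by `|α|` and the first component by
`a_j`. -/

namespace Metric

variable {𝕜 E : Type*}

section AddGroup

variable [SeminormedAddCommGroup E]

theorem hausdorffEDist_add_right_le (s t u : Set E) :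
    hausdorffEDist (s + u) (t + u) ≤ hausdorffEDist s t := by
  have half : ∀ s t : Set E, ∀ x ∈ s + u, infEDist x (t + u) ≤ hausdorffEDist s t := by
    rintro s t _ ⟨x, hx, z, hz, rfl⟩
    refine le_trans ?_ (infEDist_le_hausdorffEDist_of_mem hx)
    refine le_infEDist.2 fun y hy => ?_
    calc infEDist (x + z) (t + u) ≤ edist (x + z) (y + z) :=
          infEDist_le_edist_of_mem (add_mem_add hy hz)
      _ = edist x y := edist_add_right x y z
  refine hausdorffEDist_le_of_infEDist (half s t) fun x hx => ?_
  rw [hausdorffEDist_comm]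
  exact half t s x hx

theorem hausdorffDist_add_right_le {s t : Set E} (u : Set E) (h : hausdorffEDist s t ≠ ⊤) :
    hausdorffDist (s + u) (t + u) ≤ hausdorffDist s t :=
  ENNReal.toReal_mono h (hausdorffEDist_add_right_le s t u)

end AddGroup

section Module

variable [NormedDivisionRing 𝕜] [SeminormedAddCommGroup E] [Module 𝕜 E] [NormSMulClass 𝕜 E]

theorem hausdorffEDist_smul₀ {c : 𝕜} (hc : c ≠ 0) (s t : Set E) :
    hausdorffEDist (c • s) (c • t) = ‖c‖₊ • hausdorffEDist s t := by
  have half (s t : Set E) :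
      ⨆ x ∈ c • s, infEDist x (c • t) = ‖c‖₊ • ⨆ x ∈ s, infEDist x t := by
    rw [← image_smul, iSup_image]
    simp only [infEDist_smul₀ hc, ENNReal.smul_def, smul_eq_mul, ENNReal.mul_iSup]
  rw [hausdorffEDist_def, hausdorffEDist_def, half, half]
  exact (smul_max_of_nonneg zero_le _ _).symm

theorem hausdorffDist_smul₀ (c : 𝕜) (s t : Set E) :
    hausdorffDist (c • s) (c • t) = ‖c‖ * hausdorffDist s t := by
  obtain rfl | hc := eq_or_ne c 0
  · obtain rfl | hs := s.eq_empty_or_nonempty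
    · simp
    obtain rfl | ht := t.eq_empty_or_nonempty
    · simp
    simp [zero_smul_set hs, zero_smul_set ht]
  simp only [hausdorffDist, hausdorffEDist_smul₀ hc, ENNReal.toReal_smul, NNReal.smul_def,
    coe_nnnorm, smul_eq_mul]

theorem hausdorffEDist_smul_ne_top (c : 𝕜) {s t : Set E} (h : hausdorffEDist s t ≠ ⊤) :
    hausdorffEDist (c • s) (c • t) ≠ ⊤ := by
  obtain rfl | hc := eq_or_ne c 0
  · obtain ⟨rfl, rfl⟩ | ⟨hs, ht⟩ := empty_or_nonempty_of_hausdorffEDist_ne_top h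
    · simp
    · simp [zero_smul_set hs, zero_smul_set ht]
  · rw [hausdorffEDist_smul₀ hc, ENNReal.smul_def, smul_eq_mul]
    exact ENNReal.mul_ne_top ENNReal.coe_ne_top h

theorem hausdorffDist_smul_add_le (c : 𝕜) {s t : Set E} (u : Set E)
    (h : hausdorffEDist s t ≠ ⊤) :
    hausdorffDist (c • s + u) (c • t + u) ≤ ‖c‖ * hausdorffDist s t :=
  hausdorffDist_smul₀ c s t ▸ hausdorffDist_add_right_le u (hausdorffEDist_smul_ne_top c h)

theorem hausdorffDist_smul_add_sub_add_le (c : 𝕜) {S₁ U₁ S₂ U₂ : Set E} (P Q R V : Set E)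
    (h : hausdorffEDist (S₁ + U₁) (S₂ + U₂) ≠ ⊤) :
    hausdorffDist ((c • S₁ + P - c • Q) + (R + c • (U₁ - V)))
        ((c • S₂ + R - c • V) + (P + c • (U₂ - Q))) ≤
      ‖c‖ * hausdorffDist (S₁ + U₁) (S₂ + U₂) := by
  have regroup (S U A B C D : Set E) :
      (c • S + A - c • B) + (C + c • (U - D)) = c • (S + U) + (A + C - c • B - c • D) := by
    simp only [sub_eq_add_neg, smul_add, smul_set_neg, add_assoc, add_left_comm]
  rw [regroup, regroup, add_comm R P, sub_sub, sub_sub, add_comm (c • V)]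
  exact hausdorffDist_smul_add_le c _ h

end Module

end Metric

theorem stmt_12_general
    (a T : ℝ)
    (ζj : ℝ → ℝ) (aj : ℝ)
    (hζlip : ∀ x ∈ Icc a T, ∀ y ∈ Icc a T, |ζj x - ζj y| ≤ aj * |x - y|)
    (α : ℝ)
    (Φ B Φα : ℝ → NonemptyCompacts ℝ)
    (hΦαeq : ∀ t ∈ Icc a T,
      (Φα (ζj t) : Set ℝ) = (Φ (ζj t) : Set ℝ) + α • ((Φα t : Set ℝ) - (B t : Set ℝ))) :
    ∀ t ∈ Icc a T, ∀ w ∈ Icc a T, ∀ S₁ S₂ : NonemptyCompacts ℝ,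
      Convex ℝ (S₁ : Set ℝ) → Convex ℝ (S₂ : Set ℝ) →
      |ζj t - ζj w| +
        Metric.hausdorffDist
          ((α • (S₁ : Set ℝ) + (Φ (ζj t) : Set ℝ) - α • (B t : Set ℝ)) + (Φα (ζj w) : Set ℝ))
          ((α • (S₂ : Set ℝ) + (Φ (ζj w) : Set ℝ) - α • (B w : Set ℝ)) + (Φα (ζj t) : Set ℝ)) ≤
      max |α| aj *
        (|t - w| + Metric.hausdorffDist
          ((S₁ : Set ℝ) + (Φα w : Set ℝ)) ((S₂ : Set ℝ) + (Φα t : Set ℝ))) := by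
  intro t ht w hw S₁ S₂ _ _
  have hfin : hausdorffEDist ((S₁ : Set ℝ) + (Φα w : Set ℝ)) ((S₂ : Set ℝ) + (Φα t : Set ℝ)) ≠ ⊤ :=
    hausdorffEDist_ne_top_of_nonempty_of_bounded (S₁.nonempty.add (Φα w).nonempty)
      (S₂.nonempty.add (Φα t).nonempty) (S₁.isCompact.add (Φα w).isCompact).isBounded
      (S₂.isCompact.add (Φα t).isCompact).isBounded
  have hsets := hausdorffDist_smul_add_sub_add_le α (Φ (ζj t) : Set ℝ) (B t : Set ℝ)
    (Φ (ζj w) : Set ℝ) (B w : Set ℝ) hfin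
  rw [← hΦαeq w hw, ← hΦαeq t ht, Real.norm_eq_abs] at hsets
  rw [mul_add]
  exact add_le_add
    ((hζlip t ht w hw).trans (mul_le_mul_of_nonneg_right (le_max_right _ _) (abs_nonneg _)))
    (hsets.trans (mul_le_mul_of_nonneg_right (le_max_left _ _) hausdorffDist_nonneg))

/-- The map `G_j(t,S) = (ζ_j(t), αS + Φ(ζ_j(t)) − αB(t))` is a contraction with ratio
`max{|α|, a_j}` for the metric `D((t,S₁),(w,S₂)) = |t−w| + H_d(S₁+Φ^α(w), S₂+Φ^α(t))`
on `I × K_c(ℝ)`, provided `max{|α|, a_j} < 1`.  Here `ζj` has Lipschitz constant `aj`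
on `I = [a, T]`, `Φ, B ∈ C(I, K_c(ℝ))` and `Φ^α` satisfies the self-referential
equation `Φ^α(ζⱼ(t)) = Φ(ζⱼ(t)) + α[Φ^α(t) − B(t)]`. -/
theorem stmt_12
    (a T : ℝ) (haT : a < T)
    (ζj : ℝ → ℝ) (aj : ℝ)
    (hζmaps : MapsTo ζj (Icc a T) (Icc a T))
    (hζlip : ∀ x ∈ Icc a T, ∀ y ∈ Icc a T, |ζj x - ζj y| ≤ aj * |x - y|)
    (α : ℝ) (hmax : max |α| aj < 1)
    (Φ B Φα : ℝ → NonemptyCompacts ℝ)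
    (hΦ : ContinuousOn Φ (Icc a T)) (hB : ContinuousOn B (Icc a T))
    (hΦα : ContinuousOn Φα (Icc a T))
    (hΦconv : ∀ t ∈ Icc a T, Convex ℝ (Φ t : Set ℝ))
    (hBconv : ∀ t ∈ Icc a T, Convex ℝ (B t : Set ℝ))
    (hΦαconv : ∀ t ∈ Icc a T, Convex ℝ (Φα t : Set ℝ))
    (hΦαeq : ∀ t ∈ Icc a T,
      (Φα (ζj t) : Set ℝ) = (Φ (ζj t) : Set ℝ) + α • ((Φα t : Set ℝ) - (B t : Set ℝ))) :
    ∀ t ∈ Icc a T, ∀ w ∈ Icc a T, ∀ S₁ S₂ : NonemptyCompacts ℝ,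
      Convex ℝ (S₁ : Set ℝ) → Convex ℝ (S₂ : Set ℝ) →
      |ζj t - ζj w| +
        Metric.hausdorffDist
          ((α • (S₁ : Set ℝ) + (Φ (ζj t) : Set ℝ) - α • (B t : Set ℝ)) + (Φα (ζj w) : Set ℝ))
          ((α • (S₂ : Set ℝ) + (Φ (ζj w) : Set ℝ) - α • (B w : Set ℝ)) + (Φα (ζj t) : Set ℝ)) ≤
      max |α| aj *
        (|t - w| + Metric.hausdorffDist
          ((S₁ : Set ℝ) + (Φα w : Set ℝ)) ((S₂ : Set ℝ) + (Φα t : Set ℝ))) :=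
  stmt_12_general a T ζj aj hζlip α Φ B Φα hΦαeq
end

section
/- The graph G(Φ^α) = {(t, Φ^α(t)) : t ∈ I} ⊆ I × K_c(ℝ) of the set-valued fractal function is the attractor of the countable iterated function system {G_i : i ∈ ℕ}: G(Φ^α) = closure(⋃_{i∈ℕ} G_i(G(Φ^α))). -/
open Set Pointwise TopologicalSpace Filter

/-!
The maps `G_i` send the graph point `(t, Φ^α t)` to the graph point `(ζ_i t, Φ^α (ζ_i t))`: this is
exactly the self-affinity equation of `Φ^α`. Hence `⋃ i, G_i(graph)` is the graph of `Φ^α` over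
`⋃ i, [t_i, t_{i+1}] = [a, T)`, whose closure is the graph over `[a, T]` because `Φ^α` is
continuous there.
-/

lemma Set.smul_set_sub {M A : Type*} [AddGroup A] [DistribSMul M A] (a : M) (s t : Set A) :
    a • (s - t) = a • s - a • t :=
  image_sub (DistribSMul.toAddMonoidHom A a)

lemma StrictMono.iUnion_Icc_succ_eq_Ico_of_tendsto {X : Type*} [LinearOrder X]
    [TopologicalSpace X] [OrderTopology X] {p : ℕ → X} {T : X} (hp : StrictMono p)
    (hpT : Tendsto p atTop (nhds T)) :
    ⋃ i, Icc (p i) (p (i + 1)) = Ico (p 0) T := by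
  apply Subset.antisymm
  · refine iUnion_subset fun i => Icc_subset_Ico (hp.monotone i.zero_le) ?_
    exact (hp (i + 1).lt_succ_self).trans_le (hp.monotone.ge_of_tendsto hpT _)
  · rintro x ⟨hx0, hxT⟩
    obtain ⟨N, hxN⟩ := (hpT.eventually (eventually_gt_nhds hxT)).exists
    obtain ⟨i, -, hi⟩ := mem_iUnion₂.mp (Ico_subset_biUnion_Ico N p ⟨hx0, hxN⟩)
    exact mem_iUnion.mpr ⟨i, Ico_subset_Icc_self hi⟩

lemma ContinuousOn.closure_image_Ico {X Y : Type*} [ConditionallyCompleteLinearOrder X]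
    [TopologicalSpace X] [OrderTopology X] [DenselyOrdered X] [TopologicalSpace Y] [T2Space Y]
    {f : X → Y} {a b : X} (hf : ContinuousOn f (Icc a b)) (hab : a < b) :
    closure (f '' Ico a b) = f '' Icc a b := by
  apply Subset.antisymm
  · exact closure_minimal (image_mono Ico_subset_Icc_self)
      (isCompact_Icc.image_of_continuousOn hf).isClosed
  · rw [← closure_Ico hab.ne] at hf ⊢
    exact hf.image_closure

lemma apply_eq_of_selfAffine {α : ℝ} {ζ : ℝ → ℝ} {Φ B Φα : ℝ → NonemptyCompacts ℝ}
    {G : ℝ × NonemptyCompacts ℝ → ℝ × NonemptyCompacts ℝ} (hG1 : ∀ x, (G x).1 = ζ x.1)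
    (hG2 : ∀ x, ((G x).2 : Set ℝ) = α • (x.2 : Set ℝ) + (Φ (ζ x.1) : Set ℝ) - α • (B x.1 : Set ℝ))
    {t : ℝ} (ht : (Φα (ζ t) : Set ℝ) = (Φ (ζ t) : Set ℝ) + α • ((Φα t : Set ℝ) - (B t : Set ℝ))) :
    G (t, Φα t) = (ζ t, Φα (ζ t)) := by
  refine Prod.ext (hG1 _) (NonemptyCompacts.ext ?_)
  rw [hG2, ht, Set.smul_set_sub, add_comm (α • _), add_sub_assoc]

/-- `p n` is the partition point `t_{n+1}`, so `p 0 = a = t₁` and `T = t_∞`. -/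
theorem stmt_13_general
    (a T : ℝ) (haT : a < T)
    (p : ℕ → ℝ) (hp : StrictMono p) (hpa : p 0 = a)
    (hpT : Tendsto p atTop (nhds T))
    (ζ : ℕ → ℝ → ℝ)
    (hζim : ∀ i, ζ i '' Icc a T = Icc (p i) (p (i + 1)))
    (α : ℝ)
    (Φ B Φα : ℝ → NonemptyCompacts ℝ)
    (hΦα : ContinuousOn Φα (Icc a T))
    (hΦαeq : ∀ i, ∀ t ∈ Icc a T,
      (Φα (ζ i t) : Set ℝ) = (Φ (ζ i t) : Set ℝ) + α • ((Φα t : Set ℝ) - (B t : Set ℝ)))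
    (G : ℕ → ℝ × NonemptyCompacts ℝ → ℝ × NonemptyCompacts ℝ)
    (hG1 : ∀ i x, (G i x).1 = ζ i x.1)
    (hG2 : ∀ i x, ((G i x).2 : Set ℝ) = α • (x.2 : Set ℝ) + (Φ (ζ i x.1) : Set ℝ)
        - α • (B x.1 : Set ℝ)) :
    (fun t => (t, Φα t)) '' Icc a T =
      closure (⋃ i : ℕ, G i '' ((fun t => (t, Φα t)) '' Icc a T)) := by
  set graph : ℝ → ℝ × NonemptyCompacts ℝ := fun t => (t, Φα t)
  have hG_graph : ∀ i, G i '' (graph '' Icc a T) = graph '' Icc (p i) (p (i + 1)) := by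
    intro i
    rw [← hζim i, image_image, image_image]
    exact image_congr fun t ht => apply_eq_of_selfAffine (hG1 i) (hG2 i) (hΦαeq i t ht)
  have hgraph : ContinuousOn graph (Icc a T) := continuousOn_id.prodMk hΦα
  rw [iUnion_congr hG_graph, ← image_iUnion, hp.iUnion_Icc_succ_eq_Ico_of_tendsto hpT, hpa,
    hgraph.closure_image_Ico haT]

/-- The graph `G(Φ^α) = {(t, Φ^α(t)) : t ∈ I}` of the set-valued fractal function is the
attractor of the countable IFS `{G_i}` where
`G_i(t,S) = (ζ_i(t), αS + Φ(ζ_i(t)) − αB(t))`:  it satisfies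
`G(Φ^α) = closure (⋃ i, G_i(G(Φ^α)))`.  The graph is viewed inside `ℝ × K(ℝ)` (with the
values of all maps convex, i.e. in `K_c(ℝ)`); `p n` is the partition point `t_{n+1}`
(`p 0 = a = t₁`, `T = t_∞`) and `ζ i : I → [p i, p (i+1)]` are contraction
homeomorphisms with constants `c i`, `max{|α|, c i} < 1`. -/
theorem stmt_13
    (a T : ℝ) (haT : a < T)
    (p : ℕ → ℝ) (hp : StrictMono p) (hpa : p 0 = a)
    (hpT : Tendsto p atTop (nhds T))
    (ζ : ℕ → ℝ → ℝ) (c : ℕ → ℝ)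
    (hζlip : ∀ i, ∀ x ∈ Icc a T, ∀ y ∈ Icc a T, |ζ i x - ζ i y| ≤ c i * |x - y|)
    (hζcont : ∀ i, ContinuousOn (ζ i) (Icc a T))
    (hζinj : ∀ i, InjOn (ζ i) (Icc a T))
    (hζim : ∀ i, ζ i '' Icc a T = Icc (p i) (p (i + 1)))
    (α : ℝ) (hmax : ∀ i, max |α| (c i) < 1)
    (Φ B Φα : ℝ → NonemptyCompacts ℝ)
    (hΦ : ContinuousOn Φ (Icc a T)) (hB : ContinuousOn B (Icc a T))
    (hΦα : ContinuousOn Φα (Icc a T))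
    (hΦconv : ∀ t ∈ Icc a T, Convex ℝ (Φ t : Set ℝ))
    (hBconv : ∀ t ∈ Icc a T, Convex ℝ (B t : Set ℝ))
    (hΦαconv : ∀ t ∈ Icc a T, Convex ℝ (Φα t : Set ℝ))
    (hΦαeq : ∀ i, ∀ t ∈ Icc a T,
      (Φα (ζ i t) : Set ℝ) = (Φ (ζ i t) : Set ℝ) + α • ((Φα t : Set ℝ) - (B t : Set ℝ)))
    (G : ℕ → ℝ × NonemptyCompacts ℝ → ℝ × NonemptyCompacts ℝ)
    (hG1 : ∀ i x, (G i x).1 = ζ i x.1)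
    (hG2 : ∀ i x, ((G i x).2 : Set ℝ) = α • (x.2 : Set ℝ) + (Φ (ζ i x.1) : Set ℝ)
        - α • (B x.1 : Set ℝ)) :
    (fun t => (t, Φα t)) '' Icc a T =
      closure (⋃ i : ℕ, G i '' ((fun t => (t, Φα t)) '' Icc a T)) :=
  stmt_13_general a T haT p hp hpa hpT ζ hζim α Φ B Φα hΦα hΦαeq G hG1 hG2
end

section
/- Let 0 < b_i < 1 for all i ∈ ℕ and suppose Σ_{i=1}^∞ b_i^{s₀} = 1 for some s₀ ≥ 0. For each k ≥ 2 let s_k be the unique real with Σ_{i=1}^k b_i^{s_k} = 1. Then (s_k) is monotonically increasing and converges to s₀; that is, s₀ = sup_{k≥2} s_k = lim_{k→∞} s_k. -/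
/-!
The partial sums `x ↦ ∑_{i<k} b_i ^ x` are strictly decreasing, so the extra positive term in
`∑_{i<k+1}` forces `s_k < s_{k+1}`, and comparing with the full series forces `s_k < s₀`.
If the increasing sequence `(s_k)` had an upper bound `L < s₀`, then every partial sum at `L`
would be at most `1`, hence `∑ b_i ^ L ≤ 1 = ∑ b_i ^ s₀`, contradicting `b_i ^ L > b_i ^ s₀`.
So `s₀` is the least upper bound of `(s_k)`, which is then also its limit.
-/

open Filter Finset

theorem Finset.strictAnti_sum_rpow {ι : Type*} {t : Finset ι} (ht : t.Nonempty) {b : ι → ℝ}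
    (hb : ∀ i ∈ t, 0 < b i ∧ b i < 1) : StrictAnti fun x : ℝ => ∑ i ∈ t, b i ^ x :=
  fun _ _ hxy => sum_lt_sum_of_nonempty ht fun i hi =>
    Real.rpow_lt_rpow_of_exponent_gt (hb i hi).1 (hb i hi).2 hxy

section

variable {b : ℕ → ℝ}

theorem lt_of_sum_range_rpow_eq_one_of_sum_range_succ (hb : ∀ i, 0 < b i ∧ b i < 1)
    {k : ℕ} {x y : ℝ} (hx : ∑ i ∈ range k, b i ^ x = 1)
    (hy : ∑ i ∈ range (k + 1), b i ^ y = 1) : x < y := by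
  refine (strictAnti_sum_rpow (nonempty_range_add_one (n := k)) fun i _ => hb i).lt_iff_gt.mp ?_
  simp only [hy, sum_range_succ, hx]
  exact lt_add_of_pos_right 1 (Real.rpow_pos_of_pos (hb k).1 x)

theorem lt_of_sum_range_rpow_eq_one_of_tsum (hb : ∀ i, 0 < b i ∧ b i < 1) {k : ℕ} {x y : ℝ}
    (hx : ∑ i ∈ range k, b i ^ x = 1) (hy : ∑' i, b i ^ y = 1) : x < y := by
  have hk : (range k).Nonempty := nonempty_of_sum_ne_zero (hx ▸ one_ne_zero)
  have hpos (i : ℕ) : 0 < b i ^ y := Real.rpow_pos_of_pos (hb i).1 y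
  have hsummable : Summable fun i => b i ^ y := by
    by_contra h
    simp [tsum_eq_zero_of_not_summable h] at hy
  refine (strictAnti_sum_rpow hk fun i _ => hb i).lt_iff_gt.mp ?_
  calc ∑ i ∈ range k, b i ^ y < ∑ i ∈ range (k + 1), b i ^ y := by
        simpa [sum_range_succ] using hpos k
    _ ≤ ∑' i, b i ^ y := hsummable.sum_le_tsum _ fun i _ => (hpos i).le
    _ = ∑ i ∈ range k, b i ^ x := by rw [hx, hy]

theorem le_of_sum_range_rpow_le_one (hb : ∀ i, 0 < b i ∧ b i < 1) {s₀ L : ℝ}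
    (hsum : ∑' i, b i ^ s₀ = 1)
    (hL : ∀ n, ∑ i ∈ range n, b i ^ L ≤ 1) : s₀ ≤ L := by
  by_contra! hLs₀
  have hnonneg (i : ℕ) : 0 ≤ b i ^ L := (Real.rpow_pos_of_pos (hb i).1 L).le
  have hlt : ∑' i, b i ^ s₀ < ∑' i, b i ^ L :=
    Summable.tsum_lt_tsum_of_nonneg (i := 0)
      (fun i => (Real.rpow_pos_of_pos (hb i).1 s₀).le)
      (fun i => Real.rpow_le_rpow_of_exponent_ge (hb i).1 (hb i).2.le hLs₀.le)
      (Real.rpow_lt_rpow_of_exponent_gt (hb 0).1 (hb 0).2 hLs₀)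
      (summable_of_sum_range_le hnonneg hL)
  linarith [Real.tsum_le_of_sum_range_le hnonneg hL]

theorem isLUB_of_sum_range_rpow_eq_one (hb : ∀ i, 0 < b i ∧ b i < 1) {s₀ : ℝ}
    (hsum : ∑' i, b i ^ s₀ = 1) {s : ℕ → ℝ}
    (hs : ∀ k, 2 ≤ k → ∑ i ∈ range k, b i ^ s k = 1) :
    IsLUB (Set.range fun n => s (n + 2)) s₀ := by
  refine ⟨?_, fun L hL => le_of_sum_range_rpow_le_one hb hsum fun n => ?_⟩
  · rintro _ ⟨n, rfl⟩
    exact (lt_of_sum_range_rpow_eq_one_of_tsum hb (hs (n + 2) (by omega)) hsum).le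
  calc ∑ i ∈ range n, b i ^ L ≤ ∑ i ∈ range (n + 2), b i ^ L :=
        sum_le_sum_of_subset_of_nonneg (range_subset_range.mpr (by omega))
          fun i _ _ => (Real.rpow_pos_of_pos (hb i).1 L).le
    _ ≤ ∑ i ∈ range (n + 2), b i ^ s (n + 2) :=
        (strictAnti_sum_rpow (nonempty_range_add_one (n := n + 1)) fun i _ => hb i).antitone
          (hL ⟨n, rfl⟩)
    _ = 1 := hs (n + 2) (by omega)

end

theorem stmt_16_general (b : ℕ → ℝ) (hb : ∀ i, 0 < b i ∧ b i < 1)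
    (s₀ : ℝ) (hsum : ∑' i, b i ^ s₀ = 1)
    (s : ℕ → ℝ) (hs : ∀ k, 2 ≤ k → ∑ i ∈ Finset.range k, b i ^ s k = 1) :
    (∀ k, 2 ≤ k → s k ≤ s (k + 1)) ∧
    Tendsto s atTop (nhds s₀) ∧
    s₀ = sSup {x : ℝ | ∃ k, 2 ≤ k ∧ x = s k} := by
  have hmono (k : ℕ) (hk : 2 ≤ k) : s k ≤ s (k + 1) :=
    (lt_of_sum_range_rpow_eq_one_of_sum_range_succ hb (hs k hk) (hs (k + 1) (by omega))).le
  have hlub := isLUB_of_sum_range_rpow_eq_one hb hsum hs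
  have hrange : {x : ℝ | ∃ k, 2 ≤ k ∧ x = s k} = Set.range fun n => s (n + 2) := by
    ext x
    exact ⟨fun ⟨k, hk, hx⟩ => ⟨k - 2, by simp [hx, Nat.sub_add_cancel hk]⟩,
      fun ⟨n, hx⟩ => ⟨n + 2, by omega, hx.symm⟩⟩
  have htendsto : Tendsto (fun n => s (n + 2)) atTop (nhds s₀) :=
    tendsto_atTop_isLUB (monotone_nat_of_le_succ fun n => hmono (n + 2) (by omega)) hlub
  refine ⟨hmono, (tendsto_add_atTop_iff_nat 2).mp htendsto, ?_⟩
  rw [hrange, hlub.csSup_eq (Set.range_nonempty _)]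

/-- Here `b i` represents `b_{i+1}` of the paper, so that `∑_{i=1}^k b_i` becomes a
sum over `Finset.range k`. -/
theorem stmt_16 (b : ℕ → ℝ) (hb : ∀ i, 0 < b i ∧ b i < 1)
    (s₀ : ℝ) (hs₀ : 0 ≤ s₀) (hsum : ∑' i, b i ^ s₀ = 1)
    (s : ℕ → ℝ) (hs : ∀ k, 2 ≤ k → ∑ i ∈ Finset.range k, b i ^ s k = 1) :
    (∀ k, 2 ≤ k → s k ≤ s (k + 1)) ∧
    Tendsto s atTop (nhds s₀) ∧
    s₀ = sSup {x : ℝ | ∃ k, 2 ≤ k ∧ x = s k} :=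
  stmt_16_general b hb s₀ hsum s hs
end
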